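/- arXiv:1606.07052 — 2 statements merged into one kernel-verified Lean document; each statement's English description precedes it below -/
import Mathlib

section
/- Let τ, γ ∈ ℂ and G = {τ + tγ/2 : t ∈ [−1,1]}. Then the standard root w(λ) = (τ−λ)·√⁺(1 − γ²/(4(τ−λ)²)) is differentiable on ℂ \ G with derivative w′(λ) = −(τ − λ)/w(λ) for every λ ∈ ℂ \ G. -/
/-!
Put `z = τ − λ`, so that `w = z·s` with `s = √⁺u` and `u = 1 − γ²/(4z²)`. Off the gap, `z ≠ 0`
and `u` avoids `(−∞, 0]`: otherwise `c = γ/(2z)` would be real with `|c| ≥ 1`, and then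
`λ = τ + tγ/2` with `t = −1/c ∈ [−1, 1]`. So `√⁺` is holomorphic at `u`, and since
`s² + γ²/(4z²) = 1` the derivative `s + z·u′/(2s)` of `z ↦ z·s` collapses to `1/s = z/w`;
the chain rule through `λ ↦ τ − λ` supplies the sign.
-/

/-- The gap `G = {τ + tγ/2 : t ∈ [−1,1]} ⊂ ℂ`. -/
def gap (τ γ : ℂ) : Set ℂ :=
  {z : ℂ | ∃ t : ℝ, t ∈ Set.Icc (-1 : ℝ) 1 ∧ z = τ + (t : ℂ) * γ / 2}

/-- The standard root `w(λ) = (τ − λ) √⁺(1 − γ²/(4(τ−λ)²))`, where `√⁺` is the principal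
branch of the square root (given by the principal complex power `z ^ (1/2)`). -/
noncomputable def stdRoot (τ γ lam : ℂ) : ℂ :=
  (τ - lam) * (1 - γ ^ 2 / (4 * (τ - lam) ^ 2)) ^ ((1 : ℂ) / 2)

open Complex

lemma Complex.exists_ofReal_eq_of_one_sub_sq_notMem_slitPlane {c : ℂ}
    (h : 1 - c ^ 2 ∉ slitPlane) : ∃ r : ℝ, 1 ≤ |r| ∧ c = r := by
  simp only [mem_slitPlane_iff, not_or, not_lt, not_not, sub_re, sub_im, one_re, one_im, sq,
    mul_re, mul_im] at h
  obtain ⟨hre, him⟩ := h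
  have hc_im : c.im = 0 := by
    rcases mul_eq_zero.mp (show c.re * c.im = 0 by linarith) with h0 | h0
    · nlinarith [sq_nonneg c.im]
    · exact h0
  refine ⟨c.re, ?_, ext rfl (by simp [hc_im])⟩
  rw [← one_le_sq_iff_one_le_abs]
  nlinarith

lemma self_mem_gap (τ γ : ℂ) : τ ∈ gap τ γ :=
  ⟨0, by norm_num, by simp⟩

lemma sub_ne_zero_of_notMem_gap {τ γ lam : ℂ} (h : lam ∉ gap τ γ) : τ - lam ≠ 0 :=
  fun h0 => h (sub_eq_zero.mp h0 ▸ self_mem_gap τ γ)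

lemma one_sub_div_mem_slitPlane_of_notMem_gap {τ γ lam : ℂ} (h : lam ∉ gap τ γ) :
    1 - γ ^ 2 / (4 * (τ - lam) ^ 2) ∈ slitPlane := by
  have hz := sub_ne_zero_of_notMem_gap h
  by_contra hu
  have hc : 1 - (γ / (2 * (τ - lam))) ^ 2 = 1 - γ ^ 2 / (4 * (τ - lam) ^ 2) := by
    field_simp; ring
  obtain ⟨r, hr, hcr⟩ :=
    exists_ofReal_eq_of_one_sub_sq_notMem_slitPlane (c := γ / (2 * (τ - lam))) (hc ▸ hu)
  have hr0 : (r : ℂ) ≠ 0 := ofReal_ne_zero.mpr (by rintro rfl; norm_num at hr)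
  have hγ : γ = 2 * (τ - lam) * r := by
    rw [← hcr]; field_simp
  refine h ⟨-r⁻¹, abs_le.mp ?_, ?_⟩
  · rw [abs_neg, abs_inv]
    exact inv_le_one_of_one_le₀ hr
  · rw [hγ]; push_cast; field_simp; ring

lemma hasDerivAt_mul_cpow_half {γ z : ℂ} (hz : z ≠ 0)
    (hu : 1 - γ ^ 2 / (4 * z ^ 2) ∈ slitPlane) :
    HasDerivAt (fun z => z * (1 - γ ^ 2 / (4 * z ^ 2)) ^ ((1 : ℂ) / 2))
      (((1 - γ ^ 2 / (4 * z ^ 2)) ^ ((1 : ℂ) / 2))⁻¹) z := by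
  set u := 1 - γ ^ 2 / (4 * z ^ 2) with hu_def
  set s := u ^ ((1 : ℂ) / 2)
  have hs_sq : s ^ 2 = u := by
    simpa only [s, one_div] using cpow_ofNat_inv_pow u 2
  have hs : s ≠ 0 := by
    rintro hs0
    exact slitPlane_ne_zero hu (by rw [← hs_sq, hs0]; ring)
  have hu' : HasDerivAt (fun z => 1 - γ ^ 2 / (4 * z ^ 2)) (γ ^ 2 / (2 * z ^ 3)) z := by
    refine (((hasDerivAt_const z (γ ^ 2)).div ((hasDerivAt_pow 2 z).const_mul 4)
      (by simpa using hz)).const_sub 1).congr_deriv ?_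
    field_simp
    ring
  have hs' : HasDerivAt (fun z => (1 - γ ^ 2 / (4 * z ^ 2)) ^ ((1 : ℂ) / 2))
      (1 / 2 * s⁻¹ * (γ ^ 2 / (2 * z ^ 3))) z := by
    convert hu'.cpow_const hu using 2
    rw [show (1 : ℂ) / 2 - 1 = -(1 / 2) by norm_num, cpow_neg]
  refine ((hasDerivAt_id' z).mul hs').congr_deriv ?_
  have hkey : s ^ 2 * (4 * z ^ 2) = 4 * z ^ 2 - γ ^ 2 := by
    rw [hs_sq, hu_def]; field_simp
  change 1 * s + z * (1 / 2 * s⁻¹ * (γ ^ 2 / (2 * z ^ 3))) = s⁻¹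
  field_simp
  linear_combination hkey

/-- The standard root is differentiable off the gap `G`, with derivative
`w′(λ) = −(τ − λ)/w(λ)` at every `λ ∈ ℂ \ G`. -/
theorem stdRoot_hasDerivAt (τ γ lam : ℂ) (h : lam ∉ gap τ γ) :
    HasDerivAt (stdRoot τ γ) (-(τ - lam) / stdRoot τ γ lam) lam := by
  have hz := sub_ne_zero_of_notMem_gap h
  have hw := (hasDerivAt_mul_cpow_half hz (one_sub_div_mem_slitPlane_of_notMem_gap h)).comp lam
    ((hasDerivAt_id lam).const_sub τ)
  refine hw.congr_deriv ?_
  rw [stdRoot, neg_div, mul_comm, div_mul_cancel_left₀ hz]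
  simp
end

section
/- Let τ ∈ ℂ, γ ∈ ℂ, and R > |γ|/2, and let w(λ) = (τ−λ)·√⁺(1 − γ²/(4(τ−λ)²)) be the standard root, which is holomorphic and nonvanishing off the gap G = {τ + tγ/2 : t ∈ [−1,1]}. If f is holomorphic on an open set containing the closed disc {λ : |λ − τ| ≤ R}, then (1/(2π))·|∮_{|λ−τ|=R} f(λ)/w(λ) dλ| ≤ max_{λ∈G} |f(λ)|, where the integral is over the counterclockwise circle of radius R centered at τ. -/
/-!
For `‖λ - τ‖ > ‖γ‖/2`, substituting `u = e^{iθ}` and applying Cauchy's formula at the root of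
`u² - (4(λ - τ)/γ) u + 1` inside the unit disc gives
`1 / w(λ) = -(1/2π) ∫₀^{2π} dθ / (λ - τ - (γ/2) cos θ)`.
Inserting this into the contour integral, exchanging the two integrals and applying Cauchy's
formula at each point `τ + (γ/2) cos θ` of the gap yields
`∮ f / w = -i ∫₀^{2π} f(τ + (γ/2) cos θ) dθ`, whose modulus is at most `2π max_G ‖f‖`.
-/

open Complex Metric MeasureTheory
open scoped Real

lemma re_cpow_half_pos {z : ℂ} (hz : 0 < z.re) : 0 < (z ^ ((1 : ℂ) / 2)).re := by
  have hz0 : z ≠ 0 := by rintro rfl; simp at hz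
  have harg := abs_lt.mp (abs_arg_lt_pi_div_two_iff.mpr (Or.inl hz))
  rw [cpow_def_of_ne_zero hz0, exp_re]
  refine mul_pos (Real.exp_pos _) (Real.cos_pos_of_mem_Ioo ⟨?_, ?_⟩) <;>
  · simp only [mul_im, log_re, log_im, div_ofNat_re, div_ofNat_im, one_re, one_im]
    linarith [harg.1, harg.2]

lemma cpow_half_sq (z : ℂ) : (z ^ ((1 : ℂ) / 2)) ^ 2 = z := by
  simpa only [one_div, Nat.cast_ofNat] using cpow_nat_inv_pow z two_ne_zero

lemma norm_one_sub_lt_norm_one_add {q : ℂ} (hq : 0 < q.re) : ‖1 - q‖ < ‖1 + q‖ := by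
  rw [← sq_lt_sq₀ (norm_nonneg _) (norm_nonneg _), Complex.sq_norm, Complex.sq_norm,
    normSq_apply, normSq_apply]
  simp only [sub_re, add_re, sub_im, add_im, one_re, one_im]
  nlinarith

lemma intervalIntegral_comp_circleMap {E : Type*} [NormedAddCommGroup E] [NormedSpace ℂ E]
    (g : ℂ → E) (c : ℂ) {R : ℝ} (hR : R ≠ 0) :
    ∫ θ in (0 : ℝ)..2 * π, g (circleMap c R θ) = ∮ z in C(c, R), ((z - c) * I)⁻¹ • g z := by
  refine intervalIntegral.integral_congr fun θ _ => ?_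
  dsimp only
  rw [deriv_circleMap, circleMap_sub_center, smul_smul, mul_inv_cancel₀, one_smul]
  exact mul_ne_zero (circleMap_ne_center hR) I_ne_zero

lemma ofReal_cos_eq_circleMap (θ : ℝ) :
    (Real.cos θ : ℂ) = (circleMap 0 1 θ + (circleMap 0 1 θ)⁻¹) / 2 := by
  simp only [ofReal_cos, Complex.cos, circleMap, ofReal_one, one_mul, zero_add, ← Complex.exp_neg]
  ring_nf

lemma circleIntegral_intervalIntegral_swap {E : Type*} [NormedAddCommGroup E] [NormedSpace ℂ E]
    {F : ℂ → ℝ → E} {c : ℂ} {R a b : ℝ}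
    (hF : Continuous fun p : ℝ × ℝ => F (circleMap c R p.1) p.2) :
    ∮ z in C(c, R), ∫ θ in a..b, F z θ = ∫ θ in a..b, ∮ z in C(c, R), F z θ := by
  simp only [circleIntegral, deriv_circleMap, ← intervalIntegral.integral_smul]
  refine intervalIntegral_intervalIntegral_swap ?_
  have hcont : Continuous fun p : ℝ × ℝ => (circleMap 0 R p.1 * I) • F (circleMap c R p.1) p.2 :=
    (((continuous_circleMap 0 R).comp continuous_fst).mul continuous_const).smul hF
  exact (hcont.continuousOn.integrableOn_compact (isCompact_uIcc.prod isCompact_uIcc)).mono_set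
    (Set.prod_mono Set.uIoc_subset_uIcc Set.uIoc_subset_uIcc)

lemma integral_inv_sub_mul_cos_eq_of_roots {a b zm zp : ℂ} (hb : b ≠ 0)
    (hsum : b * (zm + zp) = 2 * a) (hprod : zm * zp = 1) (hzm : ‖zm‖ < 1) :
    ∫ θ in (0 : ℝ)..2 * π, (a - b * Real.cos θ)⁻¹ = -4 * π / (b * (zm - zp)) := by
  have hzp : 1 < ‖zp‖ := by
    have hnorm : ‖zm‖ * ‖zp‖ = 1 := by rw [← norm_mul, hprod, norm_one]
    nlinarith [norm_nonneg zm]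
  have hfactor : ∀ u ≠ 0, a - b * ((u + u⁻¹) / 2) = -(b / (2 * u)) * ((u - zm) * (u - zp)) := by
    intro u hu
    field_simp
    linear_combination (-u) * hsum + b * hprod
  have hzp_ne : ∀ z ∈ closedBall (0 : ℂ) 1, z - zp ≠ 0 := by
    intro z hz hzz
    rw [mem_closedBall_zero_iff, sub_eq_zero.mp hzz] at hz
    linarith
  calc ∫ θ in (0 : ℝ)..2 * π, (a - b * Real.cos θ)⁻¹
      = ∫ θ in (0 : ℝ)..2 * π, (fun u => (a - b * ((u + u⁻¹) / 2))⁻¹) (circleMap 0 1 θ) := by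
        simp_rw [ofReal_cos_eq_circleMap]
    _ = ∮ z in C(0, 1), ((z - 0) * I)⁻¹ • (a - b * ((z + z⁻¹) / 2))⁻¹ :=
        intervalIntegral_comp_circleMap (fun u => (a - b * ((u + u⁻¹) / 2))⁻¹) 0 one_ne_zero
    _ = ∮ z in C(0, 1), (z - zm)⁻¹ • (2 * I / b * (z - zp)⁻¹) := by
        refine circleIntegral.integral_congr zero_le_one fun z hz => ?_
        have hz1 : ‖z‖ = 1 := mem_sphere_zero_iff_norm.mp hz
        have hz0 : z ≠ 0 := norm_ne_zero_iff.mp (by simp [hz1])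
        have hzm' : z - zm ≠ 0 := fun h => by rw [sub_eq_zero.mp h] at hz1; linarith
        have hzp' := hzp_ne z (sphere_subset_closedBall hz)
        simp only [smul_eq_mul, sub_zero]
        rw [hfactor z hz0]
        field_simp
        linear_combination (-1 : ℂ) * I_sq
    _ = (2 * π * I) • (2 * I / b * (zm - zp)⁻¹) := by
        refine DiffContOnCl.circleIntegral_sub_inv_smul ?_ (mem_ball_zero_iff.mpr hzm)
        refine DifferentiableOn.diffContOnCl ?_
        rw [closure_ball 0 one_ne_zero]
        exact differentiableOn_const _ |>.mul <|
          (differentiableOn_id.sub_const zp).inv hzp_ne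
    _ = -4 * π / (b * (zm - zp)) := by
        rw [smul_eq_mul]
        field_simp
        rw [I_sq]
        ring

lemma integral_inv_sub_mul_cos {a b : ℂ} (h : ‖b‖ < ‖a‖) :
    ∫ θ in (0 : ℝ)..2 * π, (a - b * Real.cos θ)⁻¹
      = 2 * π / (a * (1 - b ^ 2 / a ^ 2) ^ ((1 : ℂ) / 2)) := by
  have ha : a ≠ 0 := norm_pos_iff.mp ((norm_nonneg b).trans_lt h)
  set q := (1 - b ^ 2 / a ^ 2) ^ ((1 : ℂ) / 2) with hq_def
  have hq2 : a ^ 2 * q ^ 2 = a ^ 2 - b ^ 2 := by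
    rw [hq_def, cpow_half_sq]
    field_simp
  have hqre : 0 < q.re := by
    refine re_cpow_half_pos ?_
    have hlt : ‖b ^ 2 / a ^ 2‖ < 1 := by
      rw [norm_div, norm_pow, norm_pow, div_lt_one (by positivity)]
      gcongr
    simp only [sub_re, one_re]
    linarith [re_le_norm (b ^ 2 / a ^ 2)]
  rcases eq_or_ne b 0 with rfl | hb
  · simp [hq_def, div_eq_mul_inv]
  -- The roots of `u² - (2a/b) u + 1`; since `Re q > 0`, only the first lies in the unit disc.
  have hzm : ‖a / b * (1 - q)‖ < 1 := by
    have hlt : ‖a / b * (1 - q)‖ < ‖a / b * (1 + q)‖ := by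
      simp only [norm_mul]
      gcongr
      exacts [norm_pos_iff.mpr (div_ne_zero ha hb), norm_one_sub_lt_norm_one_add hqre]
    have hprod : ‖a / b * (1 - q)‖ * ‖a / b * (1 + q)‖ = 1 := by
      rw [← norm_mul, ← norm_one (α := ℂ)]
      congr 1
      field_simp
      linear_combination (-1 : ℂ) * hq2
    nlinarith [norm_nonneg (a / b * (1 - q))]
  rw [integral_inv_sub_mul_cos_eq_of_roots hb (zp := a / b * (1 + q)) (by field_simp; ring)
    (by field_simp; linear_combination (-1 : ℂ) * hq2) hzm]
  rw [show a / b * (1 - q) - a / b * (1 + q) = -(2 * a * q / b) by ring]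
  field_simp
  ring

section Gap

variable {τ γ : ℂ}

lemma norm_sub_le_of_mem_gap {z : ℂ} (hz : z ∈ gap τ γ) : ‖z - τ‖ ≤ ‖γ‖ / 2 := by
  obtain ⟨t, ht, rfl⟩ := hz
  rw [add_sub_cancel_left, mul_div_assoc, norm_mul, norm_real, Real.norm_eq_abs, norm_div,
    RCLike.norm_ofNat]
  exact mul_le_of_le_one_left (by positivity) (abs_le.mpr ht)

lemma add_mul_cos_mem_gap (θ : ℝ) : τ + γ / 2 * Real.cos θ ∈ gap τ γ :=
  ⟨Real.cos θ, ⟨Real.neg_one_le_cos θ, Real.cos_le_one θ⟩, by ring⟩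

lemma isCompact_gap : IsCompact (gap τ γ) := by
  have : gap τ γ = (fun t : ℝ => τ + (t : ℂ) * γ / 2) '' Set.Icc (-1) 1 := by
    ext z
    simp only [gap, Set.mem_ofPred_eq, Set.mem_image, eq_comm]
  rw [this]
  exact isCompact_Icc.image (by fun_prop)

end Gap

lemma stdRoot_eq (τ γ z : ℂ) :
    stdRoot τ γ z = -((z - τ) * (1 - (γ / 2) ^ 2 / (z - τ) ^ 2) ^ ((1 : ℂ) / 2)) := by
  have : γ ^ 2 / (4 * (τ - z) ^ 2) = (γ / 2) ^ 2 / (z - τ) ^ 2 := by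
    rw [← neg_sub z τ, neg_sq, div_pow, div_div]
    norm_num
  rw [stdRoot, this]
  ring

lemma inv_stdRoot_eq_integral {τ γ z : ℂ} (h : ‖γ‖ / 2 < ‖z - τ‖) :
    (stdRoot τ γ z)⁻¹ = -(2 * (π : ℂ))⁻¹ * ∫ θ in (0 : ℝ)..2 * π, (z - (τ + γ / 2 * Real.cos θ))⁻¹ := by
  have key := integral_inv_sub_mul_cos (a := z - τ) (b := γ / 2) (by simpa [norm_div] using h)
  simp_rw [sub_add_eq_sub_sub, key, stdRoot_eq]
  field_simp

theorem circleIntegral_div_stdRoot_eq {τ γ : ℂ} {R : ℝ} {f : ℂ → ℂ} (hR : ‖γ‖ / 2 < R)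
    (hf : DifferentiableOn ℂ f (closedBall τ R)) :
    ∮ z in C(τ, R), f z / stdRoot τ γ z
      = -I * ∫ θ in (0 : ℝ)..2 * π, f (τ + γ / 2 * Real.cos θ) := by
  have hR0 : 0 < R := (by positivity : 0 ≤ ‖γ‖ / 2).trans_lt hR
  have hball (θ : ℝ) : τ + γ / 2 * Real.cos θ ∈ ball τ R := by
    rw [mem_ball, dist_eq_norm]
    exact (norm_sub_le_of_mem_gap (add_mul_cos_mem_gap θ)).trans_lt hR
  have hcont : Continuous fun p : ℝ × ℝ =>
      (circleMap τ R p.1 - (τ + γ / 2 * Real.cos p.2))⁻¹ • f (circleMap τ R p.1) := by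
    refine Continuous.smul (Continuous.inv₀ (((continuous_circleMap τ R).comp continuous_fst).sub (by fun_prop)) fun p h => ?_) ?_
    · exact sphere_disjoint_ball.ne_of_mem (circleMap_mem_sphere τ hR0.le p.1) (hball p.2)
        (sub_eq_zero.mp h)
    · exact hf.continuousOn.comp_continuous ((continuous_circleMap τ R).comp continuous_fst)
        fun p => circleMap_mem_closedBall τ hR0.le p.1
  calc ∮ z in C(τ, R), f z / stdRoot τ γ z
      = ∮ z in C(τ, R), -(2 * (π : ℂ))⁻¹ •
          ∫ θ in (0 : ℝ)..2 * π, (z - (τ + γ / 2 * Real.cos θ))⁻¹ • f z := by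
        refine circleIntegral.integral_congr hR0.le fun z hz => ?_
        rw [mem_sphere_iff_norm] at hz
        rw [div_eq_inv_mul, inv_stdRoot_eq_integral (hz ▸ hR), mul_assoc,
          ← intervalIntegral.integral_mul_const]
        simp only [smul_eq_mul]
    _ = -(2 * (π : ℂ))⁻¹ • ∫ θ in (0 : ℝ)..2 * π,
          ∮ z in C(τ, R), (z - (τ + γ / 2 * Real.cos θ))⁻¹ • f z := by
        rw [circleIntegral.integral_smul, circleIntegral_intervalIntegral_swap hcont]
    _ = -(2 * (π : ℂ))⁻¹ • ∫ θ in (0 : ℝ)..2 * π, (2 * π * I : ℂ) • f (τ + γ / 2 * Real.cos θ) := by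
        congr 1
        exact intervalIntegral.integral_congr fun θ _ =>
          (hf.diffContOnCl_ball subset_rfl).circleIntegral_sub_inv_smul (hball θ)
    _ = -I * ∫ θ in (0 : ℝ)..2 * π, f (τ + γ / 2 * Real.cos θ) := by
        rw [intervalIntegral.integral_smul, smul_smul, smul_eq_mul]
        congr 1
        field_simp

theorem circleIntegral_div_stdRoot_bound_general (τ γ : ℂ) (R : ℝ) (hR : ‖γ‖ / 2 < R)
    (f : ℂ → ℂ) (U : Set ℂ) (hsub : Metric.closedBall τ R ⊆ U)
    (hf : DifferentiableOn ℂ f U) :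
    (1 / (2 * Real.pi)) * ‖∮ z in C(τ, R), f z / stdRoot τ γ z‖
      ≤ sSup ((fun z => ‖f z‖) '' gap τ γ) := by
  have hgap : gap τ γ ⊆ U := fun z hz =>
    hsub (mem_closedBall_iff_norm.mpr ((norm_sub_le_of_mem_gap hz).trans hR.le))
  have hbdd : BddAbove ((fun z => ‖f z‖) '' gap τ γ) :=
    (isCompact_gap.image_of_continuousOn (hf.continuousOn.mono hgap).norm).bddAbove
  rw [circleIntegral_div_stdRoot_eq hR (hf.mono hsub), norm_mul, norm_neg, norm_I, one_mul]
  calc 1 / (2 * π) * ‖∫ θ in (0 : ℝ)..2 * π, f (τ + γ / 2 * Real.cos θ)‖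
      ≤ 1 / (2 * π) * (sSup ((fun z => ‖f z‖) '' gap τ γ) * |2 * π - 0|) := by
        gcongr
        exact intervalIntegral.norm_integral_le_of_norm_le_const fun θ _ =>
          le_csSup hbdd ⟨_, add_mul_cos_mem_gap θ, rfl⟩
    _ = sSup ((fun z => ‖f z‖) '' gap τ γ) := by
        rw [sub_zero, abs_of_pos Real.two_pi_pos]
        field_simp

/-- If `f` is holomorphic on an open set containing the closed disc of radius `R > |γ|/2`
around `τ`, then `(1/(2π)) |∮_{|λ−τ| = R} f(λ)/w(λ) dλ| ≤ max_{λ ∈ G} |f(λ)|`, where `w`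
is the standard root associated to the gap `G = {τ + tγ/2 : t ∈ [−1,1]}`. -/
theorem circleIntegral_div_stdRoot_bound (τ γ : ℂ) (R : ℝ) (hR : ‖γ‖ / 2 < R)
    (f : ℂ → ℂ) (U : Set ℂ) (hU : IsOpen U) (hsub : Metric.closedBall τ R ⊆ U)
    (hf : DifferentiableOn ℂ f U) :
    (1 / (2 * Real.pi)) * ‖∮ z in C(τ, R), f z / stdRoot τ γ z‖
      ≤ sSup ((fun z => ‖f z‖) '' gap τ γ) :=
  circleIntegral_div_stdRoot_bound_general τ γ R hR f U hsub hf
end
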